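/- In the GEW₂ model (gamma priors on all parameters), the full conditional posterior density of θ₃ is log-concave on (0, ∞), provided the gamma shape hyperparameter c₁₄ satisfies c₁₄ ≥ 1. Precisely: for any fixed θ₁, θ₂, θ₄ > 0, β > 0, c₁₄ ≥ 1 and c₁₅ > 0, the function ℓ : (0,∞) → ℝ given by ℓ(t) = (c₁₄ − 1)·ln t − c₁₅·t − t·(Σ_{i=1}^k r_iV_i) − Σ_{i=1}^k (n_i − r_i) T_i exp(−θ₁ − θ₂/T_i − tV_i − θ₄V_i/T_i) τ_i^β − Σ_{i=1}^k Σ_{j=1}^{r_i} T_i exp(−θ₁ − θ₂/T_i − tV_i − θ₄V_i/T_i) x_{ij}^β is concave on (0, ∞). -/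

import Mathlib

/-!
The log term is concave since `c₁₄ - 1 ≥ 0`, the linear terms are affine, and every remaining
term is a nonnegative multiple (as `r i ≤ n i` and `T i, τ i, x i j > 0`) of the exponential of
an affine function of `t`, hence convex; so the whole expression is concave.
-/

open Real Finset

theorem ConvexOn.sum {𝕜 E β ι : Type*} [Semiring 𝕜] [PartialOrder 𝕜] [AddCommMonoid E]
    [AddCommMonoid β] [PartialOrder β] [IsOrderedAddMonoid β] [SMul 𝕜 E] [Module 𝕜 β]
    {s : Set E} (hs : Convex 𝕜 s) {t : Finset ι} {f : ι → E → β}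
    (hf : ∀ i ∈ t, ConvexOn 𝕜 s (f i)) : ConvexOn 𝕜 s fun x => ∑ i ∈ t, f i x := by
  classical
  induction t using Finset.induction_on with
  | empty => simpa using convexOn_const 0 hs
  | insert i t hi ih =>
    simp only [Finset.sum_insert hi]
    exact (hf i (mem_insert_self i t)).add (ih fun j hj => hf j (mem_insert_of_mem hj))

section
variable {𝕜 E : Type*} [CommSemiring 𝕜] [PartialOrder 𝕜] [PosMulMono 𝕜] [AddCommMonoid E]
  [SMul 𝕜 E] {s : Set E} {f : E → 𝕜} {c : 𝕜}

theorem ConvexOn.const_mul (hf : ConvexOn 𝕜 s f) (hc : 0 ≤ c) : ConvexOn 𝕜 s fun x => c * f x :=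
  hf.smul hc

theorem ConvexOn.mul_const (hf : ConvexOn 𝕜 s f) (hc : 0 ≤ c) : ConvexOn 𝕜 s fun x => f x * c := by
  simpa only [mul_comm] using hf.const_mul hc

end

theorem convexOn_exp_affine (a b : ℝ) : ConvexOn ℝ Set.univ fun t => exp (a + t * b) :=
  (convexOn_exp.translate_right a).comp_linearMap (LinearMap.mulRight ℝ b)

theorem gew2_theta3_logconcave_general
    (k : ℕ) (T V τ : Fin k → ℝ) (n r : Fin k → ℕ)
    (x : (i : Fin k) → Fin (r i) → ℝ)
    (hT : ∀ i, 0 < T i) (hrn : ∀ i, r i ≤ n i)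
    (hτ : ∀ i, 0 < τ i) (hx : ∀ i j, 0 < x i j)
    (θ₁ θ₂ θ₄ β : ℝ)
    (c₁₄ c₁₅ : ℝ) (hcs : 1 ≤ c₁₄) :
    ConcaveOn ℝ (Set.Ioi (0 : ℝ)) (fun t : ℝ =>
      (c₁₄ - 1) * Real.log t - c₁₅ * t
      - t * (∑ i, (r i : ℝ) * V i)
      - ∑ i, ((n i : ℝ) - r i) * T i * Real.exp (-θ₁ - θ₂ / T i - t * V i - θ₄ * V i / T i) * τ i ^ β
      - ∑ i, ∑ j, T i * Real.exp (-θ₁ - θ₂ / T i - t * V i - θ₄ * V i / T i) * x i j ^ β) := by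
  have hs : Convex ℝ (Set.Ioi (0 : ℝ)) := convex_Ioi 0
  have hexp (i : Fin k) : ConvexOn ℝ (Set.Ioi 0)
      fun t => exp (-θ₁ - θ₂ / T i - t * V i - θ₄ * V i / T i) :=
    ((convexOn_exp_affine (-θ₁ - θ₂ / T i - θ₄ * V i / T i) (-V i)).subset
      (Set.subset_univ _) hs).congr fun t _ => by ring_nf
  have hlog : ConcaveOn ℝ (Set.Ioi 0) fun t => (c₁₄ - 1) * log t :=
    strictConcaveOn_log_Ioi.concaveOn.smul (by linarith)
  have hcensored : ConvexOn ℝ (Set.Ioi 0) fun t => ∑ i,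
      ((n i : ℝ) - r i) * T i * exp (-θ₁ - θ₂ / T i - t * V i - θ₄ * V i / T i) * τ i ^ β :=
    ConvexOn.sum hs fun i _ => ((hexp i).const_mul (mul_nonneg
      (sub_nonneg.2 (Nat.cast_le.2 (hrn i))) (hT i).le)).mul_const (rpow_nonneg (hτ i).le β)
  have hfailed : ConvexOn ℝ (Set.Ioi 0) fun t => ∑ i, ∑ j,
      T i * exp (-θ₁ - θ₂ / T i - t * V i - θ₄ * V i / T i) * x i j ^ β :=
    ConvexOn.sum hs fun i _ => ConvexOn.sum hs fun j _ =>
      ((hexp i).const_mul (hT i).le).mul_const (rpow_nonneg (hx i j).le β)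
  exact (((hlog.sub ((LinearMap.mulLeft ℝ c₁₅).convexOn hs)).sub
    ((LinearMap.mulRight ℝ (∑ i, (r i : ℝ) * V i)).convexOn hs)).sub hcensored).sub hfailed

theorem gew2_theta3_logconcave
    (k : ℕ) (T V τ : Fin k → ℝ) (n r : Fin k → ℕ)
    (x : (i : Fin k) → Fin (r i) → ℝ)
    (hT : ∀ i, 0 < T i) (hrn : ∀ i, r i ≤ n i)
    (hτ : ∀ i, 0 < τ i) (hx : ∀ i j, 0 < x i j)
    (θ₁ θ₂ θ₄ β : ℝ) (hθ : 0 < θ₁ ∧ 0 < θ₂ ∧ 0 < θ₄) (hβ : 0 < β)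
    (c₁₄ c₁₅ : ℝ) (hcs : 1 ≤ c₁₄) (hcr : 0 < c₁₅) :
    ConcaveOn ℝ (Set.Ioi (0 : ℝ)) (fun t : ℝ =>
      (c₁₄ - 1) * Real.log t - c₁₅ * t
      - t * (∑ i, (r i : ℝ) * V i)
      - ∑ i, ((n i : ℝ) - r i) * T i * Real.exp (-θ₁ - θ₂ / T i - t * V i - θ₄ * V i / T i) * τ i ^ β
      - ∑ i, ∑ j, T i * Real.exp (-θ₁ - θ₂ / T i - t * V i - θ₄ * V i / T i) * x i j ^ β) :=
  gew2_theta3_logconcave_general k T V τ n r x hT hrn hτ hx θ₁ θ₂ θ₄ β c₁₄ c₁₅ hcs
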